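/- Let f : 𝔹ⁿ → 𝔹ⁿ be a bijection of the open unit ball onto itself that is an isometry of the hyperbolic metric, i.e., |f(x)−f(y)|²/((1−|f(x)|²)(1−|f(y)|²)) = |x−y|²/((1−|x|²)(1−|y|²)) for all x, y ∈ 𝔹ⁿ (as holds for every conformal self-map of 𝔹ⁿ). Then for all x, y ∈ 𝔹ⁿ and every α > 0, min{√α/2, 1/2, 1/√α}·p^α_{𝔹ⁿ}(x,y) ≤ p^α_{𝔹ⁿ}(f(x), f(y)) ≤ max{2/√α, 2, √α}·p^α_{𝔹ⁿ}(x,y). -/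

import Mathlib

/-!
Since `1 - t ^ 2 = (1 - t) (1 + t)` with `1 ≤ 1 + t < 2` on `[0, 1)`, the hyperbolic invariant
`|x - y|² / ((1 - |x|²)(1 - |y|²))` and the quantity `|x - y|² / ((1 - |x|)(1 - |y|))` agree up to a
factor `4`. A hyperbolic isometry therefore changes the latter by a factor at most `4`, and so changes
`p^α` by a factor at most `2`, for every `α > 0`; finally `min {√α/2, 1/2, 1/√α} ≤ 1/2` and
`2 ≤ max {2/√α, 2, √α}`.
-/

lemma div_sqrt_le_mul_div_sqrt {c d D a a' : ℝ} (hc : 1 ≤ c) (hd : 0 ≤ d) (hD : 0 ≤ D)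
    (ha : 0 < a) (ha' : 0 < a') (h : D ^ 2 * a ≤ c ^ 2 * (d ^ 2 * a')) :
    D / √(D ^ 2 + a') ≤ c * (d / √(d ^ 2 + a)) := by
  rw [mul_div_assoc', div_le_div_iff₀ (by positivity) (by positivity)]
  have hc0 : 0 ≤ c := zero_le_one.trans hc
  have hlhs : D * √(d ^ 2 + a) = √(D ^ 2 * (d ^ 2 + a)) := by
    rw [Real.sqrt_mul (sq_nonneg D), Real.sqrt_sq hD]
  have hrhs : c * d * √(D ^ 2 + a') = √((c * d) ^ 2 * (D ^ 2 + a')) := by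
    rw [Real.sqrt_mul (sq_nonneg _), Real.sqrt_sq (mul_nonneg hc0 hd)]
  rw [hlhs, hrhs]
  apply Real.sqrt_le_sqrt
  have hc2 : 1 ≤ c ^ 2 := one_le_pow₀ hc
  nlinarith [mul_le_mul_of_nonneg_right hc2 (sq_nonneg (d * D))]

lemma one_sub_mul_one_sub_le_one_sub_sq_mul {u v : ℝ} (hu : 0 ≤ u) (hv : 0 ≤ v)
    (hu1 : u ≤ 1) (hv1 : v ≤ 1) :
    (1 - u) * (1 - v) ≤ (1 - u ^ 2) * (1 - v ^ 2) := by
  have hfactor : (1 - u ^ 2) * (1 - v ^ 2) = (1 - u) * (1 - v) * ((1 + u) * (1 + v)) := by ring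
  rw [hfactor]
  exact le_mul_of_one_le_right (mul_nonneg (by linarith) (by linarith)) (by nlinarith)

lemma one_sub_sq_mul_le_four_mul {u v : ℝ} (hu : -1 ≤ u) (hu1 : u ≤ 1) (hv1 : v ≤ 1) :
    (1 - u ^ 2) * (1 - v ^ 2) ≤ 4 * ((1 - u) * (1 - v)) := by
  have hfactor : (1 - u ^ 2) * (1 - v ^ 2) = (1 - u) * (1 - v) * ((1 + u) * (1 + v)) := by ring
  rw [hfactor, mul_comm 4]
  exact mul_le_mul_of_nonneg_left (by nlinarith) (mul_nonneg (by linarith) (by linarith))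

section PointPair

variable {E : Type*} [SeminormedAddCommGroup E]

/-- The point pair function `p^α` of the unit ball. -/
noncomputable def pointPair (α : ℝ) (x y : E) : ℝ :=
  dist x y / √(dist x y ^ 2 + α * (1 - ‖x‖) * (1 - ‖y‖))

lemma pointPair_nonneg (α : ℝ) (x y : E) : 0 ≤ pointPair α x y :=
  div_nonneg dist_nonneg (Real.sqrt_nonneg _)

variable {x y x' y' : E}

lemma sq_dist_mul_le_four_mul_of_hyperbolic_eq (hx : ‖x‖ < 1) (hy : ‖y‖ < 1)
    (hx' : ‖x'‖ < 1) (hy' : ‖y'‖ < 1)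
    (h : dist x' y' ^ 2 / ((1 - ‖x'‖ ^ 2) * (1 - ‖y'‖ ^ 2)) =
      dist x y ^ 2 / ((1 - ‖x‖ ^ 2) * (1 - ‖y‖ ^ 2))) :
    dist x' y' ^ 2 * ((1 - ‖x‖) * (1 - ‖y‖)) ≤
      4 * (dist x y ^ 2 * ((1 - ‖x'‖) * (1 - ‖y'‖))) := by
  have one_sub_sq_pos {z : E} (hz : ‖z‖ < 1) : 0 < 1 - ‖z‖ ^ 2 := by
    nlinarith [norm_nonneg z]
  have hcross : dist x' y' ^ 2 * ((1 - ‖x‖ ^ 2) * (1 - ‖y‖ ^ 2)) =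
      dist x y ^ 2 * ((1 - ‖x'‖ ^ 2) * (1 - ‖y'‖ ^ 2)) := by
    rwa [div_eq_div_iff (mul_pos (one_sub_sq_pos hx') (one_sub_sq_pos hy')).ne'
      (mul_pos (one_sub_sq_pos hx) (one_sub_sq_pos hy)).ne'] at h
  calc dist x' y' ^ 2 * ((1 - ‖x‖) * (1 - ‖y‖))
      ≤ dist x' y' ^ 2 * ((1 - ‖x‖ ^ 2) * (1 - ‖y‖ ^ 2)) := by
        exact mul_le_mul_of_nonneg_left (one_sub_mul_one_sub_le_one_sub_sq_mul (norm_nonneg x)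
          (norm_nonneg y) hx.le hy.le) (sq_nonneg _)
    _ = dist x y ^ 2 * ((1 - ‖x'‖ ^ 2) * (1 - ‖y'‖ ^ 2)) := hcross
    _ ≤ dist x y ^ 2 * (4 * ((1 - ‖x'‖) * (1 - ‖y'‖))) := by
        exact mul_le_mul_of_nonneg_left (one_sub_sq_mul_le_four_mul
          (by linarith [norm_nonneg x']) hx'.le hy'.le) (sq_nonneg _)
    _ = 4 * (dist x y ^ 2 * ((1 - ‖x'‖) * (1 - ‖y'‖))) := by ring

lemma pointPair_le_two_mul_of_hyperbolic_eq {α : ℝ} (hα : 0 < α) (hx : ‖x‖ < 1) (hy : ‖y‖ < 1)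
    (hx' : ‖x'‖ < 1) (hy' : ‖y'‖ < 1)
    (h : dist x' y' ^ 2 / ((1 - ‖x'‖ ^ 2) * (1 - ‖y'‖ ^ 2)) =
      dist x y ^ 2 / ((1 - ‖x‖ ^ 2) * (1 - ‖y‖ ^ 2))) :
    pointPair α x' y' ≤ 2 * pointPair α x y := by
  have hcmp := sq_dist_mul_le_four_mul_of_hyperbolic_eq hx hy hx' hy' h
  refine div_sqrt_le_mul_div_sqrt one_le_two dist_nonneg dist_nonneg ?_ ?_ ?_
  · exact mul_pos (mul_pos hα (sub_pos.2 hx)) (sub_pos.2 hy)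
  · exact mul_pos (mul_pos hα (sub_pos.2 hx')) (sub_pos.2 hy')
  · calc dist x' y' ^ 2 * (α * (1 - ‖x‖) * (1 - ‖y‖))
        = α * (dist x' y' ^ 2 * ((1 - ‖x‖) * (1 - ‖y‖))) := by ring
      _ ≤ α * (4 * (dist x y ^ 2 * ((1 - ‖x'‖) * (1 - ‖y'‖)))) := by gcongr
      _ = 2 ^ 2 * (dist x y ^ 2 * (α * (1 - ‖x'‖) * (1 - ‖y'‖))) := by ring

end PointPair

theorem stmt_17_general (n : ℕ) (α : ℝ) (hα : 0 < α)
    (f : EuclideanSpace ℝ (Fin n) → EuclideanSpace ℝ (Fin n))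
    (hbij : Set.BijOn f (Metric.ball 0 1) (Metric.ball 0 1))
    (hiso : ∀ x ∈ Metric.ball (0 : EuclideanSpace ℝ (Fin n)) 1,
      ∀ y ∈ Metric.ball (0 : EuclideanSpace ℝ (Fin n)) 1,
        dist (f x) (f y) ^ 2 / ((1 - ‖f x‖ ^ 2) * (1 - ‖f y‖ ^ 2)) =
          dist x y ^ 2 / ((1 - ‖x‖ ^ 2) * (1 - ‖y‖ ^ 2)))
    (x y : EuclideanSpace ℝ (Fin n))
    (hx : x ∈ Metric.ball (0 : EuclideanSpace ℝ (Fin n)) 1)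
    (hy : y ∈ Metric.ball (0 : EuclideanSpace ℝ (Fin n)) 1) :
    min (Real.sqrt α / 2) (min (1 / 2) (1 / Real.sqrt α)) *
          (dist x y / Real.sqrt (dist x y ^ 2 + α * (1 - ‖x‖) * (1 - ‖y‖))) ≤
        dist (f x) (f y) /
          Real.sqrt (dist (f x) (f y) ^ 2 + α * (1 - ‖f x‖) * (1 - ‖f y‖)) ∧
      dist (f x) (f y) /
          Real.sqrt (dist (f x) (f y) ^ 2 + α * (1 - ‖f x‖) * (1 - ‖f y‖)) ≤
        max (2 / Real.sqrt α) (max 2 (Real.sqrt α)) *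
          (dist x y / Real.sqrt (dist x y ^ 2 + α * (1 - ‖x‖) * (1 - ‖y‖))) := by
  change _ * pointPair α x y ≤ pointPair α (f x) (f y) ∧
    pointPair α (f x) (f y) ≤ _ * pointPair α x y
  have hnx := mem_ball_zero_iff.1 hx
  have hny := mem_ball_zero_iff.1 hy
  have hnfx := mem_ball_zero_iff.1 (hbij.mapsTo hx)
  have hnfy := mem_ball_zero_iff.1 (hbij.mapsTo hy)
  have hupper := pointPair_le_two_mul_of_hyperbolic_eq hα hnx hny hnfx hnfy (hiso x hx y hy)
  have hlower := pointPair_le_two_mul_of_hyperbolic_eq hα hnfx hnfy hnx hny (hiso x hx y hy).symm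
  have hmin : min (√α / 2) (min (1 / 2) (1 / √α)) ≤ 1 / 2 :=
    (min_le_right _ _).trans (min_le_left _ _)
  have hmax : 2 ≤ max (2 / √α) (max 2 √α) := (le_max_left _ _).trans (le_max_right _ _)
  have hp := pointPair_nonneg α x y
  constructor
  · linarith [mul_le_mul_of_nonneg_right hmin hp]
  · linarith [mul_le_mul_of_nonneg_right hmax hp]

/-- If `f : 𝔹ⁿ → 𝔹ⁿ` is a bijection of the open unit ball onto itself which is an isometry
of the hyperbolic metric, i.e. `|f(x)−f(y)|²/((1−|f(x)|²)(1−|f(y)|²)) = |x−y|²/((1−|x|²)(1−|y|²))`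
(as holds for conformal self-maps of `𝔹ⁿ`), then for all `x, y ∈ 𝔹ⁿ` and `α > 0`:
`min{√α/2, 1/2, 1/√α}·p^α_𝔹(x,y) ≤ p^α_𝔹(f(x),f(y)) ≤ max{2/√α, 2, √α}·p^α_𝔹(x,y)`. -/
theorem stmt_17 (n : ℕ) (hn : 1 ≤ n) (α : ℝ) (hα : 0 < α)
    (f : EuclideanSpace ℝ (Fin n) → EuclideanSpace ℝ (Fin n))
    (hbij : Set.BijOn f (Metric.ball 0 1) (Metric.ball 0 1))
    (hiso : ∀ x ∈ Metric.ball (0 : EuclideanSpace ℝ (Fin n)) 1,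
      ∀ y ∈ Metric.ball (0 : EuclideanSpace ℝ (Fin n)) 1,
        dist (f x) (f y) ^ 2 / ((1 - ‖f x‖ ^ 2) * (1 - ‖f y‖ ^ 2)) =
          dist x y ^ 2 / ((1 - ‖x‖ ^ 2) * (1 - ‖y‖ ^ 2)))
    (x y : EuclideanSpace ℝ (Fin n))
    (hx : x ∈ Metric.ball (0 : EuclideanSpace ℝ (Fin n)) 1)
    (hy : y ∈ Metric.ball (0 : EuclideanSpace ℝ (Fin n)) 1) :
    min (Real.sqrt α / 2) (min (1 / 2) (1 / Real.sqrt α)) *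
          (dist x y / Real.sqrt (dist x y ^ 2 + α * (1 - ‖x‖) * (1 - ‖y‖))) ≤
        dist (f x) (f y) /
          Real.sqrt (dist (f x) (f y) ^ 2 + α * (1 - ‖f x‖) * (1 - ‖f y‖)) ∧
      dist (f x) (f y) /
          Real.sqrt (dist (f x) (f y) ^ 2 + α * (1 - ‖f x‖) * (1 - ‖f y‖)) ≤
        max (2 / Real.sqrt α) (max 2 (Real.sqrt α)) *
          (dist x y / Real.sqrt (dist x y ^ 2 + α * (1 - ‖x‖) * (1 - ‖y‖))) :=
  stmt_17_general n α hα f hbij hiso x y hx hy
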